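/- For any proper 3-colouring c of G and any unit vector x, the set of unit vectors orthogonal to x is coloured using exactly the two colours different from c(x): no vector orthogonal to x has colour c(x), and each of the other two colours occurs on some unit vector orthogonal to x. -/

import Mathlib

/-!
The plane orthogonal to `x` contains two orthogonal unit vectors `u`, `v`. Properness forces
`c x`, `c u`, `c v` to be pairwise distinct, so `c u` and `c v` are the two colours other than `c x`.
-/

open scoped RealInnerProductSpace InnerProductSpace
open Module Submodule

section OrthonormalPair

variable {𝕜 E : Type*} [RCLike 𝕜] [NormedAddCommGroup E] [InnerProductSpace 𝕜 E]
  [FiniteDimensional 𝕜 E]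

lemma two_le_finrank_orthogonal_span_singleton (hE : 3 ≤ finrank 𝕜 E) (x : E) :
    2 ≤ finrank 𝕜 (𝕜 ∙ x)ᗮ := by
  have hx : finrank 𝕜 (𝕜 ∙ x) ≤ 1 := by
    simpa using finrank_span_le_card (R := 𝕜) ({x} : Set E)
  have := (𝕜 ∙ x).finrank_add_finrank_orthogonal
  omega

lemma exists_orthonormal_pair_orthogonal (hE : 3 ≤ finrank 𝕜 E) (x : E) :
    ∃ u v : E, ‖u‖ = 1 ∧ ‖v‖ = 1 ∧ ⟪u, v⟫_𝕜 = 0 ∧ ⟪x, u⟫_𝕜 = 0 ∧ ⟪x, v⟫_𝕜 = 0 := by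
  have hK := two_le_finrank_orthogonal_span_singleton hE x
  let b := stdOrthonormalBasis 𝕜 (𝕜 ∙ x)ᗮ
  let u := b ⟨0, by omega⟩
  let v := b ⟨1, by omega⟩
  refine ⟨u, v, b.orthonormal.1 _, b.orthonormal.1 _, b.orthonormal.2 (by simp), ?_, ?_⟩
  · exact mem_orthogonal_singleton_iff_inner_right.1 u.2
  · exact mem_orthogonal_singleton_iff_inner_right.1 v.2

end OrthonormalPair

lemma fin_three_eq_or_eq_of_ne {a b c k : Fin 3} (hab : a ≠ b) (hac : a ≠ c) (hbc : b ≠ c)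
    (hk : k ≠ a) : k = b ∨ k = c := by
  omega

theorem orthogonal_circle_two_colours
    (c : {x : EuclideanSpace ℝ (Fin 3) // ‖x‖ = 1} → Fin 3)
    (hc : ∀ u v : {x : EuclideanSpace ℝ (Fin 3) // ‖x‖ = 1},
      ⟪(u : EuclideanSpace ℝ (Fin 3)), (v : EuclideanSpace ℝ (Fin 3))⟫ = 0 →
        c u ≠ c v)
    (x : {x : EuclideanSpace ℝ (Fin 3) // ‖x‖ = 1}) :
    (∀ y : {x : EuclideanSpace ℝ (Fin 3) // ‖x‖ = 1},
        ⟪(x : EuclideanSpace ℝ (Fin 3)), (y : EuclideanSpace ℝ (Fin 3))⟫ = 0 →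
          c y ≠ c x) ∧
    (∀ k : Fin 3, k ≠ c x →
      ∃ y : {x : EuclideanSpace ℝ (Fin 3) // ‖x‖ = 1},
        ⟪(x : EuclideanSpace ℝ (Fin 3)), (y : EuclideanSpace ℝ (Fin 3))⟫ = 0 ∧
          c y = k) := by
  refine ⟨fun y hxy => (hc x y hxy).symm, fun k hk => ?_⟩
  obtain ⟨u, v, hu, hv, huv, hxu, hxv⟩ :=
    exists_orthonormal_pair_orthogonal (𝕜 := ℝ) finrank_euclideanSpace_fin.ge (x : _)
  rcases fin_three_eq_or_eq_of_ne (hc x ⟨u, hu⟩ hxu) (hc x ⟨v, hv⟩ hxv) (hc ⟨u, hu⟩ ⟨v, hv⟩ huv)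
    hk with rfl | rfl
  · exact ⟨⟨u, hu⟩, hxu, rfl⟩
  · exact ⟨⟨v, hv⟩, hxv, rfl⟩
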